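/- Strong local minimality transfers from the FBE to the original cost: let γ > 0 and let u⋆ ∈ E be a fixed point of the forward–backward map, u⋆ ∈ T_γ(u⋆). If u⋆ is a strong local minimum of φ_γ, i.e., there exist c > 0 and ρ > 0 with φ_γ(u) ≥ φ_γ(u⋆) + c‖u − u⋆‖² for all u with ‖u − u⋆‖ < ρ, then φ(u) ≥ φ(u⋆) + c‖u − u⋆‖² for all u with ‖u − u⋆‖ < ρ; in particular u⋆ is a strong local minimum of φ. -/

import Mathlib

open scoped RealInnerProductSpace
open Filter Topology Asymptotics

/-- Moreau envelope `g^γ(v) = inf_w { g(w) + (1/(2γ))‖w − v‖² }` of an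
extended-real-valued function `g`. -/
noncomputable def moreauEnv {E : Type*} [NormedAddCommGroup E] [InnerProductSpace ℝ E]
    (g : E → EReal) (γ : ℝ) (v : E) : EReal :=
  ⨅ w : E, g w + (((1 / (2 * γ)) * ‖w - v‖ ^ 2 : ℝ) : EReal)

/-- The (set-valued) proximal mapping
`prox_{γg}(v) = argmin_w { g(w) + (1/(2γ))‖w − v‖² }`. -/
def proxSet {E : Type*} [NormedAddCommGroup E] [InnerProductSpace ℝ E]
    (g : E → EReal) (γ : ℝ) (v : E) : Set E :=
  {w | ∀ w' : E, g w + (((1 / (2 * γ)) * ‖w - v‖ ^ 2 : ℝ) : EReal)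
      ≤ g w' + (((1 / (2 * γ)) * ‖w' - v‖ ^ 2 : ℝ) : EReal)}

/-- The forward–backward envelope
`φ_γ(u) = ℓ(u) − (γ/2)‖∇ℓ(u)‖² + g^γ(u − γ∇ℓ(u))`, where `l'` plays the role
of the gradient `∇ℓ`. -/
noncomputable def fbe {E : Type*} [NormedAddCommGroup E] [InnerProductSpace ℝ E]
    (l : E → ℝ) (l' : E → E) (g : E → EReal) (γ : ℝ) (u : E) : EReal :=
  ((l u - (γ / 2) * ‖l' u‖ ^ 2 : ℝ) : EReal) + moreauEnv g γ (u - γ • l' u)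

/-! The FBE lies below the cost `φ = ℓ + g` everywhere (take `w = u` in the Moreau envelope) and
agrees with it at fixed points of the forward–backward map (where `w = u` attains that infimum),
so a quadratic lower bound for the FBE around such a point transfers verbatim to `φ`. -/

theorem EReal.coe_sub_add_add_coe (a b : ℝ) (x : EReal) :
    ((a - b : ℝ) : EReal) + (x + (b : EReal)) = (a : EReal) + x := by
  induction x using EReal.rec with
  | bot => simp
  | top => exact EReal.coe_add_top _
  | coe x => norm_cast; ring

section

variable {E : Type*} [NormedAddCommGroup E] [InnerProductSpace ℝ E]

theorem moreau_penalty_sub_smul (γ : ℝ) (u d : E) :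
    (1 / (2 * γ)) * ‖u - (u - γ • d)‖ ^ 2 = (γ / 2) * ‖d‖ ^ 2 := by
  rw [sub_sub_cancel, norm_smul, mul_pow, Real.norm_eq_abs, sq_abs]
  rcases eq_or_ne γ 0 with rfl | hγ
  · simp
  · field_simp

theorem moreauEnv_le (g : E → EReal) (γ : ℝ) (v w : E) :
    moreauEnv g γ v ≤ g w + (((1 / (2 * γ)) * ‖w - v‖ ^ 2 : ℝ) : EReal) :=
  iInf_le (fun w => g w + (((1 / (2 * γ)) * ‖w - v‖ ^ 2 : ℝ) : EReal)) w

theorem moreauEnv_eq_of_mem_proxSet {g : E → EReal} {γ : ℝ} {v w : E} (hw : w ∈ proxSet g γ v) :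
    moreauEnv g γ v = g w + (((1 / (2 * γ)) * ‖w - v‖ ^ 2 : ℝ) : EReal) :=
  le_antisymm (moreauEnv_le g γ v w) (le_iInf hw)

variable (l : E → ℝ) (l' : E → E) (g : E → EReal) (γ : ℝ)

theorem fbe_le_cost (u : E) : fbe l l' g γ u ≤ (l u : EReal) + g u := by
  have henv := moreauEnv_le g γ (u - γ • l' u) u
  rw [moreau_penalty_sub_smul] at henv
  calc fbe l l' g γ u
      ≤ ((l u - (γ / 2) * ‖l' u‖ ^ 2 : ℝ) : EReal) + (g u + (((γ / 2) * ‖l' u‖ ^ 2 : ℝ) : EReal)) :=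
        add_le_add_right henv _
    _ = (l u : EReal) + g u := EReal.coe_sub_add_add_coe _ _ _

theorem fbe_eq_cost_of_mem_proxSet {u : E} (hu : u ∈ proxSet g γ (u - γ • l' u)) :
    fbe l l' g γ u = (l u : EReal) + g u := by
  rw [fbe, moreauEnv_eq_of_mem_proxSet hu, moreau_penalty_sub_smul, EReal.coe_sub_add_add_coe]

end

theorem strong_local_min_fbe_to_cost_general
    {E : Type*} [NormedAddCommGroup E] [InnerProductSpace ℝ E]
    (l : E → ℝ) (l' : E → E) (g : E → EReal) (γ : ℝ)
    (ustar : E) (hfix : ustar ∈ proxSet g γ (ustar - γ • l' ustar))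
    (c ρ : ℝ)
    (hmin : ∀ u : E, ‖u - ustar‖ < ρ →
      fbe l l' g γ ustar + ((c * ‖u - ustar‖ ^ 2 : ℝ) : EReal) ≤ fbe l l' g γ u) :
    ∀ u : E, ‖u - ustar‖ < ρ →
      ((l ustar : EReal) + g ustar) + ((c * ‖u - ustar‖ ^ 2 : ℝ) : EReal) ≤
        (l u : EReal) + g u := by
  intro u hu
  rw [← fbe_eq_cost_of_mem_proxSet l l' g γ hfix]
  exact (hmin u hu).trans (fbe_le_cost l l' g γ u)

/-- strong local minimality transfers from the FBE to the
original cost at fixed points of the forward–backward map. -/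
theorem strong_local_min_fbe_to_cost
    {E : Type*} [NormedAddCommGroup E] [InnerProductSpace ℝ E] [FiniteDimensional ℝ E]
    (l : E → ℝ) (l' : E → E) (g : E → EReal) (L γ : ℝ)
    (hL : 0 < L) (hγ : 0 < γ)
    (hgrad : ∀ x : E, HasGradientAt l (l' x) x)
    (hlip : ∀ x y : E, ‖l' x - l' y‖ ≤ L * ‖x - y‖)
    (hproper : ∃ x : E, g x ≠ ⊤) (hbot : ∀ x : E, g x ≠ ⊥)
    (hlsc : LowerSemicontinuous g)
    (hbdd : ∃ m : ℝ, ∀ x : E, (m : EReal) ≤ g x)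
    (ustar : E) (hfix : ustar ∈ proxSet g γ (ustar - γ • l' ustar))
    (c ρ : ℝ) (hc : 0 < c) (hρ : 0 < ρ)
    (hmin : ∀ u : E, ‖u - ustar‖ < ρ →
      fbe l l' g γ ustar + ((c * ‖u - ustar‖ ^ 2 : ℝ) : EReal) ≤ fbe l l' g γ u) :
    ∀ u : E, ‖u - ustar‖ < ρ →
      ((l ustar : EReal) + g ustar) + ((c * ‖u - ustar‖ ^ 2 : ℝ) : EReal) ≤
        (l u : EReal) + g u :=
  strong_local_min_fbe_to_cost_general l l' g γ ustar hfix c ρ hmin
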